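/- arXiv:1206.2663 — 3 statements merged into one kernel-verified Lean document; each statement's English description precedes it below -/
import Mathlib

section
/- Let g ≥ 1 and c > 0. There exists a constant C > 0, depending only on g and c, with the following property: if Y = (y_{ij}) is a real symmetric positive definite g×g matrix such that |y_{ij}| ≤ min(y_{ii}, y_{jj})/2 for all i ≠ j and ∏_{i=1}^g y_{ii} ≤ c · det Y, then for all i, j the entries of the inverse matrix satisfy |(Y⁻¹)_{ij}| ≤ C · (y_{ii}·y_{jj})^{−1/2}. -/
/-!
Rescaling by `diagonal (√y_kk)` turns `Y` into a matrix `B` whose entries have absolute value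
at most `1` and with `det B = det Y / ∏ y_kk ≥ 1 / c`. By Cramer's rule and the crude bound
`|det M| ≤ g!` for matrices with entries in `[-1, 1]`, `|(B⁻¹)_ij| ≤ g! · c`, and
`(Y⁻¹)_ij = (B⁻¹)_ij / √(y_ii y_jj)`.
-/

open Matrix Nat

theorem Real.min_le_sqrt_mul (x y : ℝ) : min x y ≤ √(x * y) := by
  rcases lt_or_ge (min x y) 0 with hneg | hnonneg
  · exact hneg.le.trans (Real.sqrt_nonneg _)
  · refine Real.le_sqrt_of_sq_le ?_
    rw [sq]
    exact mul_le_mul (min_le_left x y) (min_le_right x y) hnonneg (le_min_iff.mp hnonneg).1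

namespace Matrix

variable {n : Type*} [Fintype n] [DecidableEq n]

theorem abs_adjugate_apply_le_factorial {A : Matrix n n ℝ} (hA : ∀ k l, |A k l| ≤ 1)
    (i j : n) : |A.adjugate i j| ≤ (Fintype.card n)! := by
  have hrow : ∀ k l, |A.updateRow j (Pi.single i 1) k l| ≤ 1 := by
    intro k l
    rcases eq_or_ne k j with rfl | hk
    · rcases eq_or_ne l i with rfl | hl <;> simp [*]
    · simpa [updateRow_ne hk] using hA k l
  simpa [adjugate_apply] using det_le (abv := AbsoluteValue.abs) hrow

theorem abs_inv_apply_le_factorial_div_det {A : Matrix n n ℝ} (hA : ∀ k l, |A k l| ≤ 1)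
    (hdet : 0 < A.det) (i j : n) : |A⁻¹ i j| ≤ (Fintype.card n)! / A.det := by
  rw [inv_def, Ring.inverse_eq_inv', smul_apply, smul_eq_mul, abs_mul, abs_inv,
    abs_of_pos hdet, inv_mul_eq_div]
  exact div_le_div_of_nonneg_right (abs_adjugate_apply_le_factorial hA i j) hdet.le

theorem inv_diagonal_mul_mul_diagonal_apply {K : Type*} [Field K] {d : n → K}
    (hd : ∀ k, d k ≠ 0) (A : Matrix n n K) (i j : n) :
    (diagonal d * A * diagonal d)⁻¹ i j = A⁻¹ i j / (d i * d j) := by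
  have hdiag : (diagonal d)⁻¹ = diagonal d⁻¹ :=
    inv_eq_left_inv (by simp [diagonal_mul_diagonal, hd])
  rw [mul_inv_rev, mul_inv_rev, hdiag, ← mul_assoc, mul_diagonal, diagonal_mul]
  simp only [Pi.inv_apply]
  field_simp

theorem abs_inv_apply_le_of_abs_apply_le_sqrt_mul {A : Matrix n n ℝ} (hdiag : ∀ k, 0 < A k k)
    (hdet : 0 < A.det) (hA : ∀ k l, |A k l| ≤ √(A k k * A l l)) (i j : n) :
    |A⁻¹ i j| ≤ (Fintype.card n)! * ((∏ k, A k k) / A.det) / √(A i i * A j j) := by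
  set a : n → ℝ := fun k ↦ √(A k k)
  have ha : ∀ k, 0 < a k := fun k ↦ Real.sqrt_pos.mpr (hdiag k)
  have hsqrt : ∀ k l, √(A k k * A l l) = a k * a l := fun k l ↦ Real.sqrt_mul (hdiag k).le _
  set B := diagonal a⁻¹ * A * diagonal a⁻¹
  have hAB : A = diagonal a * B * diagonal a := by
    have hinv : ∀ k, a k * a⁻¹ k = 1 := fun k ↦ mul_inv_cancel₀ (ha k).ne'
    simp only [B, ← mul_assoc, diagonal_mul_diagonal, hinv, diagonal_one, one_mul]
    simp only [mul_assoc, diagonal_mul_diagonal, fun k ↦ mul_comm (a⁻¹ k) (a k), hinv,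
      diagonal_one, mul_one]
  have hB : ∀ k l, |B k l| ≤ 1 := by
    intro k l
    simp only [B, mul_diagonal, diagonal_mul, Pi.inv_apply, abs_mul, abs_inv, abs_of_pos (ha k),
      abs_of_pos (ha l)]
    rw [← div_eq_inv_mul, ← div_eq_mul_inv, div_div, div_le_one (mul_pos (ha k) (ha l))]
    exact hsqrt k l ▸ hA k l
  have hBdet : B.det = A.det / ∏ k, A k k := by
    have hprod : ∏ k, A k k = (∏ k, a k) * ∏ k, a k := by
      rw [← Finset.prod_mul_distrib]
      exact Finset.prod_congr rfl fun k _ ↦ (Real.mul_self_sqrt (hdiag k).le).symm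
    simp only [B, det_mul, det_diagonal, Pi.inv_apply, Finset.prod_inv_distrib, hprod]
    field_simp
  have hBdet_pos : 0 < B.det := by
    rw [hBdet]; exact div_pos hdet (Finset.prod_pos fun k _ ↦ hdiag k)
  calc |A⁻¹ i j| = |B⁻¹ i j| / (a i * a j) := by
        conv_lhs => rw [hAB]
        rw [inv_diagonal_mul_mul_diagonal_apply (fun k ↦ (ha k).ne'), abs_div,
          abs_of_pos (mul_pos (ha i) (ha j))]
    _ ≤ (Fintype.card n)! / B.det / (a i * a j) := by
        gcongr; exact abs_inv_apply_le_factorial_div_det hB hBdet_pos i j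
    _ = (Fintype.card n)! * ((∏ k, A k k) / A.det) / √(A i i * A j j) := by
        rw [hBdet, hsqrt]; field_simp

end Matrix

theorem stmt13_general (g : ℕ) (c : ℝ) (hc : 0 < c) :
    ∃ C : ℝ, 0 < C ∧
      ∀ Y : Matrix (Fin g) (Fin g) ℝ, Y.IsSymm → Y.PosDef →
        (∀ i j, i ≠ j → |Y i j| ≤ min (Y i i) (Y j j) / 2) →
        (∏ i : Fin g, Y i i) ≤ c * Y.det →
        ∀ i j, |Y⁻¹ i j| ≤ C / Real.sqrt (Y i i * Y j j) := by
  refine ⟨g ! * c, by positivity, fun Y _ hY hoff hprod i j ↦ ?_⟩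
  have hdiag : ∀ k, 0 < Y k k := fun k ↦ hY.diag_pos
  have hentry : ∀ k l, |Y k l| ≤ √(Y k k * Y l l) := by
    intro k l
    rcases eq_or_ne k l with rfl | hkl
    · rw [Real.sqrt_mul_self (hdiag k).le, abs_of_pos (hdiag k)]
    · calc |Y k l| ≤ min (Y k k) (Y l l) / 2 := hoff k l hkl
        _ ≤ min (Y k k) (Y l l) := half_le_self (le_min (hdiag k).le (hdiag l).le)
        _ ≤ √(Y k k * Y l l) := Real.min_le_sqrt_mul _ _
  have hratio : (∏ k, Y k k) / Y.det ≤ c := (div_le_iff₀ hY.det_pos).mpr hprod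
  calc |Y⁻¹ i j| ≤ g ! * ((∏ k, Y k k) / Y.det) / √(Y i i * Y j j) := by
        simpa using abs_inv_apply_le_of_abs_apply_le_sqrt_mul hdiag hY.det_pos hentry i j
    _ ≤ g ! * c / √(Y i i * Y j j) := by gcongr

theorem stmt13 (g : ℕ) (hg : 1 ≤ g) (c : ℝ) (hc : 0 < c) :
    ∃ C : ℝ, 0 < C ∧
      ∀ Y : Matrix (Fin g) (Fin g) ℝ, Y.IsSymm → Y.PosDef →
        (∀ i j, i ≠ j → |Y i j| ≤ min (Y i i) (Y j j) / 2) →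
        (∏ i : Fin g, Y i i) ≤ c * Y.det →
        ∀ i j, |Y⁻¹ i j| ≤ C / Real.sqrt (Y i i * Y j j) :=
  stmt13_general g c hc
end

section
/- Let g ≥ 1 and let Y = (y_{ij}) be a Minkowski-reduced real symmetric positive definite g×g matrix. Then det Y ≤ ∏_{i=1}^g y_{ii}, and there exists a constant c_g > 0, depending only on g, such that ∏_{i=1}^g y_{ii} ≤ c_g · det Y. -/
/-!
Hadamard's inequality `det Y ≤ ∏ yᵢᵢ` holds for every positive definite `Y`: rescaled to unit
diagonal, `Y` has nonnegative eigenvalues summing to `g`, and `λ ≤ exp (λ - 1)` bounds their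
product by `1`. The reverse inequality follows in the same way once `Y ≥ d · diag Y` as quadratic
forms, with `d > 0` depending only on `g`: every eigenvalue of the rescaled matrix is then at
least `d`.

That comparison is proved by induction on `g`. If `y_kk ≤ s² y_{k+1,k+1}` for some `k`, the
diagonal blocks on the indices `≤ k` and `> k` are again reduced, and the reduction inequalities
`2 |y_ij| ≤ y_ii ≤ y_jj` (`i < j`) make the off-diagonal block cost at most `g s` times the
diagonal. Otherwise all diagonal entries lie within a factor `s^(2g)` of the largest one `M`, so
all entries are `O(M)`, while `aᵀ Y a ≥ y_11 ≳ M` at every nonzero integer vector `a`;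
approximating a unit vector `u` simultaneously by rationals `a / q` with bounded denominator
turns this into `uᵀ Y u ≳ M`.
-/

open Matrix

/-- A real symmetric positive definite matrix `Y` is Minkowski reduced if
`aᵀ·Y·a ≥ y_{kk}` for every `k` and every integer vector `a` whose entries
`a_k, …, a_g` have gcd `1`, and moreover `y_{k,k+1} ≥ 0` for all `k`. -/
def MinkowskiReduced {g : ℕ} (Y : Matrix (Fin g) (Fin g) ℝ) : Prop :=
  (∀ (k : Fin g) (a : Fin g → ℤ),
      Finset.gcd (Finset.univ.filter fun l => k ≤ l) a = 1 →
      Y k k ≤ dotProduct (fun i => (a i : ℝ)) (Y.mulVec fun i => (a i : ℝ))) ∧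
  ∀ (k : Fin g) (h : (k : ℕ) + 1 < g), 0 ≤ Y k ⟨(k : ℕ) + 1, h⟩

theorem Finset.gcd_eq_one_of_isUnit {α β : Type*} [CommMonoidWithZero α] [NormalizedGCDMonoid α]
    {s : Finset β} {f : β → α} {b : β} (hb : b ∈ s) (hu : IsUnit (f b)) : s.gcd f = 1 := by
  rw [← Finset.normalize_gcd, normalize_eq_one]
  exact isUnit_of_dvd_unit (Finset.gcd_dvd hb) hu

theorem Function.Injective.sum_mul_extend_zero {α β : Type*} [Fintype α] [Fintype β]
    {f : α → β} (hf : f.Injective) (F : β → ℝ) (x : α → ℝ) :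
    ∑ j, F j * Function.extend f x 0 j = ∑ i, F (f i) * x i := by
  classical
  rw [← Finset.sum_subset (Finset.subset_univ (Finset.univ.image f)), Finset.sum_image hf.injOn]
  · simp [hf.extend_apply]
  · intro j _ hj
    rw [Function.extend_apply' _ _ _ (by simpa using hj)]
    simp

theorem neg_mul_add_le_two_mul_mul_mul {p r y s u v : ℝ} (hp : 0 ≤ p) (hr : 0 ≤ r) (hs : 0 ≤ s)
    (hy : y ^ 2 ≤ s ^ 2 * p * r) : -(s * (p * u ^ 2 + r * v ^ 2)) ≤ 2 * (y * u * v) := by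
  have h1 : (2 * y * u * v) ^ 2 ≤ (s * (p * u ^ 2 + r * v ^ 2)) ^ 2 := by
    nlinarith [sq_nonneg (p * u ^ 2 - r * v ^ 2), sq_nonneg s,
      mul_nonneg (sq_nonneg (u * v)) (sub_nonneg.2 hy)]
  nlinarith [abs_le_of_sq_le_sq' h1 (by positivity)]

theorem exists_nat_int_abs_mul_sub_le {ι : Type*} [Fintype ι] (x : ι → ℝ) {N : ℕ} (hN : 0 < N) :
    ∃ q : ℕ, ∃ a : ι → ℤ, 0 < q ∧ q ≤ N ^ Fintype.card ι ∧ ∀ i, |q * x i - a i| ≤ 1 / N := by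
  classical
  have hN' : (0 : ℝ) < N := by exact_mod_cast hN
  set f : ℕ → ι → ℤ := fun k i => ⌊N * Int.fract (k * x i)⌋
  have hmaps : ∀ k ∈ Finset.range (N ^ Fintype.card ι + 1),
      f k ∈ Fintype.piFinset fun _ => Finset.Ico (0 : ℤ) N := by
    intro k _
    simp only [f, Fintype.mem_piFinset, Finset.mem_Ico, Int.floor_nonneg, Int.floor_lt]
    refine fun i => ⟨mul_nonneg hN'.le (Int.fract_nonneg _), ?_⟩
    push_cast
    nlinarith [Int.fract_lt_one (k * x i)]
  have hcard : (Fintype.piFinset fun _ : ι => Finset.Ico (0 : ℤ) N).card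
      < (Finset.range (N ^ Fintype.card ι + 1)).card := by simp
  obtain ⟨k₁, hk₁, k₂, hk₂, hne, heq⟩ := Finset.exists_ne_map_eq_of_card_lt_of_maps_to hcard hmaps
  wlog hlt : k₁ < k₂ generalizing k₁ k₂
  · exact this k₂ hk₂ k₁ hk₁ hne.symm heq.symm (by omega)
  refine ⟨k₂ - k₁, fun i => ⌊k₂ * x i⌋ - ⌊k₁ * x i⌋, by omega, ?_, fun i => ?_⟩
  · simp only [Finset.mem_range] at hk₂
    omega
  have h := Int.abs_sub_lt_one_of_floor_eq_floor (congrFun heq i).symm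
  rw [← mul_sub, abs_mul, abs_of_pos hN'] at h
  have hfract : ((k₂ - k₁ : ℕ) : ℝ) * x i - ((⌊k₂ * x i⌋ - ⌊k₁ * x i⌋ : ℤ) : ℝ)
      = Int.fract (k₂ * x i) - Int.fract (k₁ * x i) := by
    rw [Nat.cast_sub hlt.le]
    simp only [Int.fract]
    push_cast
    ring
  rw [hfract, le_div_iff₀ hN', mul_comm]
  exact h.le

theorem exists_nat_int_ne_zero_abs_mul_sub_le {ι : Type*} [Fintype ι] {u : ι → ℝ}
    (hu : ∑ i, u i ^ 2 = 1) {N : ℕ} (hN : Fintype.card ι < N ^ 2) :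
    ∃ q : ℕ, ∃ a : ι → ℤ, a ≠ 0 ∧ q ≤ N ^ Fintype.card ι ∧ ∀ i, |q * u i - a i| ≤ 1 / N := by
  obtain ⟨q, a, hq, hqN, happrox⟩ :=
    exists_nat_int_abs_mul_sub_le u (N := N) (Nat.pos_of_ne_zero fun h => by simp [h] at hN)
  refine ⟨q, a, ?_, hqN, happrox⟩
  rintro rfl
  have hq2 : (q : ℝ) ^ 2 ≤ Fintype.card ι * (1 / N) ^ 2 := calc
    (q : ℝ) ^ 2 = ∑ i, (q * u i) ^ 2 := by simp only [mul_pow, ← Finset.mul_sum, hu, mul_one]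
    _ ≤ ∑ _i : ι, (1 / N : ℝ) ^ 2 := Finset.sum_le_sum fun i _ => by
        simpa using sq_le_sq' (abs_le.1 (happrox i)).1 (abs_le.1 (happrox i)).2
    _ = Fintype.card ι * (1 / N) ^ 2 := by simp
  have hq1 : (1 : ℝ) ≤ q := by exact_mod_cast hq
  have hN' : (Fintype.card ι : ℝ) < N ^ 2 := by exact_mod_cast hN
  rw [div_pow, one_pow, mul_one_div, le_div_iff₀ (by nlinarith)] at hq2
  nlinarith [one_le_pow₀ (n := 2) hq1]

namespace Matrix

variable {ι : Type*} [Fintype ι]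

theorem dotProduct_mulVec_eq_sum (Y : Matrix ι ι ℝ) (x : ι → ℝ) :
    x ⬝ᵥ Y *ᵥ x = ∑ i, ∑ j, Y i j * x i * x j := by
  simp only [dotProduct, mulVec, Finset.mul_sum]
  exact Finset.sum_congr rfl fun i _ => Finset.sum_congr rfl fun j _ => by ring

theorem dotProduct_mulVec_smul_single_add_single [DecidableEq ι] (Y : Matrix ι ι ℝ) (c : ℝ)
    (k l : ι) :
    (c • Pi.single k 1 + Pi.single l 1) ⬝ᵥ Y *ᵥ (c • Pi.single k 1 + Pi.single l 1)
      = c ^ 2 * Y k k + c * (Y k l + Y l k) + Y l l := by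
  simp only [add_dotProduct, dotProduct_add, mulVec_add, mulVec_smul, smul_dotProduct,
    dotProduct_smul, mulVec_single_one, single_one_dotProduct, col_apply, smul_eq_mul]
  ring

theorem dotProduct_submatrix_mulVec {κ : Type*} [Fintype κ] (Y : Matrix ι ι ℝ) {f : κ → ι}
    (hf : f.Injective) (x : κ → ℝ) :
    x ⬝ᵥ Y.submatrix f f *ᵥ x = Function.extend f x 0 ⬝ᵥ Y *ᵥ Function.extend f x 0 := by
  simp only [dotProduct, mulVec, hf.sum_mul_extend_zero, submatrix_apply]
  simp only [mul_comm (Function.extend f x 0 _), hf.sum_mul_extend_zero, mul_comm (x _)]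

theorem dotProduct_mulVec_le_of_abs_le {Y : Matrix ι ι ℝ} {M η : ℝ} (hM : ∀ i j, |Y i j| ≤ M)
    {x : ι → ℝ} (hx : ∀ i, |x i| ≤ η) : x ⬝ᵥ Y *ᵥ x ≤ Fintype.card ι ^ 2 * M * η ^ 2 :=
  calc x ⬝ᵥ Y *ᵥ x = ∑ i, ∑ j, Y i j * x i * x j := dotProduct_mulVec_eq_sum Y x
    _ ≤ ∑ _i : ι, ∑ _j : ι, M * η * η := by
        refine Finset.sum_le_sum fun i _ => Finset.sum_le_sum fun j _ => ?_
        have hη : 0 ≤ η := (abs_nonneg _).trans (hx i)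
        have hM0 : 0 ≤ M := (abs_nonneg _).trans (hM i j)
        calc Y i j * x i * x j ≤ |Y i j| * |x i| * |x j| := by
              rw [← abs_mul, ← abs_mul]
              exact le_abs_self _
          _ ≤ M * η * η := by gcongr <;> simp [hM, hx]
    _ = Fintype.card ι ^ 2 * M * η ^ 2 := by simp; ring

theorem PosSemidef.dotProduct_sub_mulVec_sub_le {Y : Matrix ι ι ℝ} (hY : Y.PosSemidef)
    (v w : ι → ℝ) : (v - w) ⬝ᵥ Y *ᵥ (v - w) ≤ 2 * (v ⬝ᵥ Y *ᵥ v) + 2 * (w ⬝ᵥ Y *ᵥ w) := by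
  have h := hY.dotProduct_mulVec_nonneg (v + w)
  simp only [star_trivial, add_dotProduct, dotProduct_add, mulVec_add, sub_dotProduct,
    dotProduct_sub, mulVec_sub] at h ⊢
  linarith

theorem mul_sum_sq_le_of_forall_sum_sq_eq_one {Y : Matrix ι ι ℝ} {c : ℝ}
    (h : ∀ u : ι → ℝ, ∑ i, u i ^ 2 = 1 → c ≤ u ⬝ᵥ Y *ᵥ u) (x : ι → ℝ) :
    c * ∑ i, x i ^ 2 ≤ x ⬝ᵥ Y *ᵥ x := by
  rcases (Finset.sum_nonneg fun i _ => sq_nonneg (x i)).eq_or_lt with hS | hS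
  · have hx := (Fintype.sum_eq_zero_iff_of_nonneg fun i => sq_nonneg (x i)).1 hS.symm
    obtain rfl : x = 0 := funext fun i => by simpa using congrFun hx i
    simp
  have hu := h ((√(∑ i, x i ^ 2))⁻¹ • x) (by
    simp only [Pi.smul_apply, smul_eq_mul, mul_pow, ← Finset.mul_sum, inv_pow,
      Real.sq_sqrt hS.le]
    exact inv_mul_cancel₀ hS.ne')
  rw [mulVec_smul, dotProduct_smul, smul_dotProduct, smul_eq_mul, smul_eq_mul, ← mul_assoc,
    ← sq, inv_pow, Real.sq_sqrt hS.le, le_inv_mul_iff₀ hS] at hu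
  linarith

/-- For a simultaneous approximation `a / q` of `u` with error `e = q • u - a`,
`μ ≤ Y[a] ≤ 2 q² Y[u] + 2 Y[e]`, and `Y[e] ≤ μ / 4` by the choice of `N`. -/
theorem PosSemidef.div_le_dotProduct_mulVec_of_le_int {Y : Matrix ι ι ℝ} (hY : Y.PosSemidef)
    {M μ : ℝ} (hM : ∀ i j, |Y i j| ≤ M)
    (hint : ∀ a : ι → ℤ, a ≠ 0 → μ ≤ (fun i => (a i : ℝ)) ⬝ᵥ Y *ᵥ fun i => (a i : ℝ))
    {N : ℕ} (hN : 4 * Fintype.card ι ^ 2 * M ≤ μ * N ^ 2) (hnN : Fintype.card ι < N ^ 2)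
    {u : ι → ℝ} (hu : ∑ i, u i ^ 2 = 1) :
    μ / (4 * N ^ (2 * Fintype.card ι)) ≤ u ⬝ᵥ Y *ᵥ u := by
  set n := Fintype.card ι
  have hN0 : 0 < N := Nat.pos_of_ne_zero fun h => by simp [h] at hnN
  obtain ⟨q, a, ha, hqN, happrox⟩ := exists_nat_int_ne_zero_abs_mul_sub_le hu hnN
  have hQa := hY.dotProduct_sub_mulVec_sub_le ((q : ℝ) • u) fun i => q * u i - a i
  have hsplit : (q : ℝ) • u - (fun i => q * u i - a i) = fun i => (a i : ℝ) := by
    ext i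
    simp
  rw [hsplit, mulVec_smul, dotProduct_smul, smul_dotProduct, smul_eq_mul, smul_eq_mul] at hQa
  have hQe := dotProduct_mulVec_le_of_abs_le hM happrox
  have hq2 : (q : ℝ) * q ≤ N ^ (2 * n) := by
    have : (q : ℝ) ≤ N ^ n := by exact_mod_cast hqN
    rw [two_mul, pow_add]
    exact mul_le_mul this this (by positivity) (by positivity)
  have hE : n ^ 2 * M * (1 / N : ℝ) ^ 2 ≤ μ / 4 := by
    rw [div_pow, one_pow, mul_one_div, div_le_div_iff₀ (by positivity) (by norm_num)]
    linarith
  have hQu := hY.dotProduct_mulVec_nonneg u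
  simp only [star_trivial] at hQu
  have := hint a ha
  rw [div_le_iff₀ (by positivity)]
  nlinarith

theorem PosSemidef.mul_sum_sq_le_of_le_int {Y : Matrix ι ι ℝ} (hY : Y.PosSemidef) {M μ : ℝ}
    (hμ : 0 < μ) (hM : ∀ i j, |Y i j| ≤ M)
    (hint : ∀ a : ι → ℤ, a ≠ 0 → μ ≤ (fun i => (a i : ℝ)) ⬝ᵥ Y *ᵥ fun i => (a i : ℝ))
    {N : ℕ} (hN : 4 * Fintype.card ι ^ 2 * M ≤ μ * N ^ 2) (x : ι → ℝ) :
    μ / (4 * N ^ (2 * Fintype.card ι)) * ∑ i, x i ^ 2 ≤ x ⬝ᵥ Y *ᵥ x := by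
  classical
  rcases isEmpty_or_nonempty ι with hι | ⟨⟨i₀⟩⟩
  · simp
  have hμM : μ ≤ M := by
    have hcast : (fun i => ((Pi.single i₀ (1 : ℤ) : ι → ℤ) i : ℝ)) = Pi.single i₀ 1 := by
      ext i
      simp [Pi.single_apply]
    have := hint (Pi.single i₀ 1) (by simp)
    simp only [hcast, mulVec_single_one, single_one_dotProduct] at this
    exact this.trans ((le_abs_self _).trans (hM i₀ i₀))
  have hn : (1 : ℝ) ≤ Fintype.card ι := by exact_mod_cast Fintype.card_pos_iff.2 ⟨i₀⟩
  have hN4 : 4 * (Fintype.card ι : ℝ) ^ 2 ≤ N ^ 2 := by nlinarith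
  have hnN : Fintype.card ι < N ^ 2 := by
    have : (Fintype.card ι : ℝ) < N ^ 2 := by nlinarith
    exact_mod_cast this
  exact mul_sum_sq_le_of_forall_sum_sq_eq_one
    (fun u hu => hY.div_le_dotProduct_mulVec_of_le_int hM hint hN hnN hu) x

def DiagLowerBound (d : ℝ) (Y : Matrix ι ι ℝ) : Prop :=
  ∀ x, d * ∑ i, Y i i * x i ^ 2 ≤ x ⬝ᵥ Y *ᵥ x

theorem DiagLowerBound.mono {d d' : ℝ} {Y : Matrix ι ι ℝ} (h : DiagLowerBound d Y)
    (hd : d' ≤ d) (hdiag : ∀ i, 0 ≤ Y i i) : DiagLowerBound d' Y := fun x =>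
  (mul_le_mul_of_nonneg_right hd
    (Finset.sum_nonneg fun i _ => mul_nonneg (hdiag i) (sq_nonneg _))).trans (h x)

theorem IsSymm.dotProduct_mulVec_eq_blocks {a b : ℕ} {Y : Matrix (Fin (a + b)) (Fin (a + b)) ℝ}
    (hS : Y.IsSymm) (x : Fin (a + b) → ℝ) :
    x ⬝ᵥ Y *ᵥ x
      = (x ∘ Fin.castAdd b) ⬝ᵥ Y.submatrix (Fin.castAdd b) (Fin.castAdd b) *ᵥ (x ∘ Fin.castAdd b)
        + (x ∘ Fin.natAdd a) ⬝ᵥ Y.submatrix (Fin.natAdd a) (Fin.natAdd a) *ᵥ (x ∘ Fin.natAdd a)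
        + 2 * ∑ i, ∑ j, Y (Fin.castAdd b i) (Fin.natAdd a j)
          * x (Fin.castAdd b i) * x (Fin.natAdd a j) := by
  simp only [dotProduct_mulVec_eq_sum, Fin.sum_univ_add, Finset.sum_add_distrib,
    submatrix_apply, Function.comp_apply]
  have hsymm : ∑ i, ∑ j, Y (Fin.natAdd a i) (Fin.castAdd b j) * x (Fin.natAdd a i)
      * x (Fin.castAdd b j) = ∑ i, ∑ j, Y (Fin.castAdd b i) (Fin.natAdd a j)
      * x (Fin.castAdd b i) * x (Fin.natAdd a j) := by
    rw [Finset.sum_comm]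
    exact Finset.sum_congr rfl fun i _ => Finset.sum_congr rfl fun j _ => by rw [hS.apply]; ring
  rw [hsymm]
  ring

theorem diagLowerBound_of_blocks {a b : ℕ} {Y : Matrix (Fin (a + b)) (Fin (a + b)) ℝ}
    (hS : Y.IsSymm) (hdiag : ∀ i, 0 ≤ Y i i) {d s : ℝ} (hs : 0 ≤ s)
    (hA : DiagLowerBound d (Y.submatrix (Fin.castAdd b) (Fin.castAdd b)))
    (hC : DiagLowerBound d (Y.submatrix (Fin.natAdd a) (Fin.natAdd a)))
    (hcross : ∀ i j, Y (Fin.castAdd b i) (Fin.natAdd a j) ^ 2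
      ≤ s ^ 2 * Y (Fin.castAdd b i) (Fin.castAdd b i) * Y (Fin.natAdd a j) (Fin.natAdd a j)) :
    DiagLowerBound (d - (a + b) * s) Y := by
  intro x
  set P : Fin a → ℝ := fun i => Y (Fin.castAdd b i) (Fin.castAdd b i) * x (Fin.castAdd b i) ^ 2
  set R : Fin b → ℝ := fun j => Y (Fin.natAdd a j) (Fin.natAdd a j) * x (Fin.natAdd a j) ^ 2
  have hP : 0 ≤ ∑ i, P i := Finset.sum_nonneg fun i _ => mul_nonneg (hdiag _) (sq_nonneg _)
  have hR : 0 ≤ ∑ j, R j := Finset.sum_nonneg fun j _ => mul_nonneg (hdiag _) (sq_nonneg _)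
  have hcross_ge : -(s * (b * ∑ i, P i + a * ∑ j, R j)) ≤ 2 * ∑ i, ∑ j,
      Y (Fin.castAdd b i) (Fin.natAdd a j) * x (Fin.castAdd b i) * x (Fin.natAdd a j) :=
    calc -(s * (b * ∑ i, P i + a * ∑ j, R j)) = ∑ i, ∑ j, -(s * (P i + R j)) := by
          simp only [Finset.sum_neg_distrib, ← Finset.mul_sum, Finset.sum_add_distrib,
            Finset.sum_const, Finset.card_univ, Fintype.card_fin, nsmul_eq_mul]
      _ ≤ ∑ i, ∑ j, 2 * (Y (Fin.castAdd b i) (Fin.natAdd a j)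
            * x (Fin.castAdd b i) * x (Fin.natAdd a j)) :=
          Finset.sum_le_sum fun i _ => Finset.sum_le_sum fun j _ =>
            neg_mul_add_le_two_mul_mul_mul (hdiag _) (hdiag _) hs (hcross i j)
      _ = _ := by simp only [Finset.mul_sum]
  have hA' : d * ∑ i, P i ≤ _ := hA (x ∘ Fin.castAdd b)
  have hC' : d * ∑ j, R j ≤ _ := hC (x ∘ Fin.natAdd a)
  have hab : s * (b * ∑ i, P i + a * ∑ j, R j) ≤ (a + b) * s * (∑ i, P i + ∑ j, R j) := by
    have := mul_nonneg (mul_nonneg hs hP) (Nat.cast_nonneg (α := ℝ) a)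
    have := mul_nonneg (mul_nonneg hs hR) (Nat.cast_nonneg (α := ℝ) b)
    nlinarith
  rw [hS.dotProduct_mulVec_eq_blocks, Fin.sum_univ_add]
  change (d - (a + b) * s) * (∑ i, P i + ∑ j, R j) ≤ _
  nlinarith

section Determinant

variable [DecidableEq ι]

theorem IsHermitian.pow_card_le_det {B : Matrix ι ι ℝ} (hB : B.IsHermitian) {d : ℝ} (hd : 0 ≤ d)
    (hle : ∀ x, d * ∑ i, x i ^ 2 ≤ x ⬝ᵥ B *ᵥ x) : d ^ Fintype.card ι ≤ B.det := by
  rw [hB.det_eq_prod_eigenvalues, ← Finset.card_univ, ← Finset.prod_const]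
  refine Finset.prod_le_prod (fun _ _ => hd) fun i _ => ?_
  have hnorm : ∑ j, (hB.eigenvectorBasis i) j ^ 2 = 1 := by
    rw [← EuclideanSpace.real_norm_sq_eq, hB.eigenvectorBasis.orthonormal.1 i, one_pow]
  have hv := hle (hB.eigenvectorBasis i)
  rw [hnorm, hB.mulVec_eigenvectorBasis, dotProduct_smul] at hv
  simpa [dotProduct, ← sq, hnorm] using hv

theorem PosSemidef.det_le_one_of_diag_eq_one {B : Matrix ι ι ℝ} (hB : B.PosSemidef) (h1 : ∀ i, B i i = 1) :
    B.det ≤ 1 := by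
  have htr : ∑ i, (hB.isHermitian.eigenvalues i - 1) = 0 := by
    have := hB.isHermitian.trace_eq_sum_eigenvalues
    simp only [trace, diag, h1, Finset.sum_const, RCLike.ofReal_real_eq_id, id] at this
    simp [Finset.sum_sub_distrib, ← this]
  calc B.det = ∏ i, hB.isHermitian.eigenvalues i := by simpa using hB.isHermitian.det_eq_prod_eigenvalues
    _ ≤ ∏ i, Real.exp (hB.isHermitian.eigenvalues i - 1) :=
        Finset.prod_le_prod (fun i _ => hB.eigenvalues_nonneg i) fun i _ => by
          linarith [Real.add_one_le_exp (hB.isHermitian.eigenvalues i - 1)]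
    _ = 1 := by rw [← Real.exp_sum, htr, Real.exp_zero]

noncomputable def diagNormalize (Y : Matrix ι ι ℝ) : Matrix ι ι ℝ :=
  diagonal (fun i => (√(Y i i))⁻¹) * Y * diagonal (fun i => (√(Y i i))⁻¹)

theorem diagNormalize_apply (Y : Matrix ι ι ℝ) (i j : ι) :
    Y.diagNormalize i j = (√(Y i i))⁻¹ * Y i j * (√(Y j j))⁻¹ := by
  simp [diagNormalize, diagonal_mul, mul_diagonal]

theorem dotProduct_diagNormalize_mulVec (Y : Matrix ι ι ℝ) (x : ι → ℝ) :
    x ⬝ᵥ Y.diagNormalize *ᵥ x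
      = (fun i => x i / √(Y i i)) ⬝ᵥ Y *ᵥ (fun i => x i / √(Y i i)) := by
  simp only [dotProduct, mulVec, diagNormalize_apply, Finset.mul_sum]
  exact Finset.sum_congr rfl fun i _ => Finset.sum_congr rfl fun j _ => by ring

theorem PosSemidef.diagNormalize {Y : Matrix ι ι ℝ} (hY : Y.PosSemidef) :
    Y.diagNormalize.PosSemidef := by
  simpa [Matrix.diagNormalize] using
    hY.mul_mul_conjTranspose_same (diagonal fun i => (√(Y i i))⁻¹)

theorem PosDef.diagNormalize_apply_self {Y : Matrix ι ι ℝ} (hY : Y.PosDef) (i : ι) :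
    Y.diagNormalize i i = 1 := by
  have := (Real.sqrt_pos.2 (hY.diag_pos (i := i))).ne'
  rw [diagNormalize_apply]
  field_simp
  exact (Real.sq_sqrt hY.diag_pos.le).symm

theorem PosDef.det_eq_prod_diag_mul_det_diagNormalize {Y : Matrix ι ι ℝ} (hY : Y.PosDef) :
    Y.det = (∏ i, Y i i) * Y.diagNormalize.det := by
  have hinv : ∀ i, (√(Y i i))⁻¹ * (√(Y i i))⁻¹ = (Y i i)⁻¹ := fun i => by
    rw [← mul_inv, Real.mul_self_sqrt hY.diag_pos.le]
  have hprod : (∏ i, Y i i) ≠ 0 := (Finset.prod_pos fun i _ => hY.diag_pos).ne'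
  rw [Matrix.diagNormalize, det_mul, det_mul, det_diagonal, mul_right_comm,
    ← Finset.prod_mul_distrib, Finset.prod_congr rfl fun i _ => hinv i, Finset.prod_inv_distrib]
  field_simp

theorem PosDef.det_le_prod_diag {Y : Matrix ι ι ℝ} (hY : Y.PosDef) : Y.det ≤ ∏ i, Y i i := by
  rw [hY.det_eq_prod_diag_mul_det_diagNormalize]
  exact mul_le_of_le_one_right (Finset.prod_nonneg fun i _ => hY.diag_pos.le)
    (hY.posSemidef.diagNormalize.det_le_one_of_diag_eq_one hY.diagNormalize_apply_self)

theorem PosDef.pow_card_mul_prod_diag_le_det {Y : Matrix ι ι ℝ} (hY : Y.PosDef) {d : ℝ}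
    (hd : 0 ≤ d) (h : DiagLowerBound d Y) : d ^ Fintype.card ι * ∏ i, Y i i ≤ Y.det := by
  rw [hY.det_eq_prod_diag_mul_det_diagNormalize, mul_comm]
  gcongr
  · exact Finset.prod_nonneg fun i _ => hY.diag_pos.le
  refine hY.posSemidef.diagNormalize.isHermitian.pow_card_le_det hd fun x => ?_
  rw [dotProduct_diagNormalize_mulVec]
  convert h (fun i => x i / √(Y i i)) using 3 with i
  rw [div_pow, Real.sq_sqrt hY.diag_pos.le, mul_div_cancel₀ _ hY.diag_pos.ne']

end Determinant

end Matrix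

namespace MinkowskiReduced

variable {n : ℕ} {Y : Matrix (Fin n) (Fin n) ℝ}

theorem diag_mono (hR : MinkowskiReduced Y) : Monotone fun k => Y k k := by
  intro k l hkl
  have h := hR.1 k (Pi.single l 1)
    (Finset.gcd_eq_one_of_isUnit (Finset.mem_filter.2 ⟨Finset.mem_univ _, hkl⟩) (by simp))
  have hcast : (fun i => ((Pi.single l (1 : ℤ) : Fin n → ℤ) i : ℝ)) = Pi.single l 1 := by
    ext i
    simp [Pi.single_apply]
  simpa [hcast] using h

theorem two_mul_abs_apply_le (hR : MinkowskiReduced Y) (hS : Y.IsSymm) {k l : Fin n}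
    (hkl : k < l) : 2 * |Y k l| ≤ Y k k := by
  have key : ∀ ε : ℤ, IsUnit ε → -(ε * (2 * Y k l)) ≤ Y k k := by
    intro ε hε
    have h := hR.1 l (Pi.single k ε + Pi.single l 1)
      (Finset.gcd_eq_one_of_isUnit (b := l) (by simp) (by simp [hkl.ne']))
    have hcast : (fun i => (((Pi.single k ε + Pi.single l 1 : Fin n → ℤ) i : ℤ) : ℝ))
        = (ε : ℝ) • Pi.single k 1 + Pi.single l 1 := by
      ext i
      by_cases hik : i = k <;> by_cases hil : i = l <;> simp [hik, hil, hkl.ne, hkl.ne']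
    have hε2 : (ε : ℝ) ^ 2 = 1 := by
      rcases Int.isUnit_iff.1 hε with rfl | rfl <;> norm_num
    rw [hcast, dotProduct_mulVec_smul_single_add_single, hS.apply k l, hε2] at h
    linarith
  have h1 := key 1 isUnit_one
  have h2 := key (-1) isUnit_one.neg
  push_cast at h1 h2
  rw [mul_comm, ← le_div_iff₀ two_pos, abs_le]
  constructor <;> linarith

theorem abs_apply_le (hR : MinkowskiReduced Y) (hS : Y.IsSymm) (hdiag : ∀ i, 0 ≤ Y i i) {M : ℝ}
    (hM : ∀ k, Y k k ≤ M) (i j : Fin n) : |Y i j| ≤ M := by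
  rcases lt_trichotomy i j with h | rfl | h
  · linarith [hR.two_mul_abs_apply_le hS h, hM i, abs_nonneg (Y i j)]
  · rw [abs_of_nonneg (hdiag i)]
    exact hM i
  · rw [← hS.apply]
    linarith [hR.two_mul_abs_apply_le hS h, hM j, abs_nonneg (Y j i)]

theorem apply_zero_zero_le (hR : MinkowskiReduced Y) (hY : Y.PosSemidef) (hn : 0 < n)
    {a : Fin n → ℤ} (ha : a ≠ 0) :
    Y ⟨0, hn⟩ ⟨0, hn⟩ ≤ (fun i => (a i : ℝ)) ⬝ᵥ Y *ᵥ (fun i => (a i : ℝ)) := by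
  obtain ⟨b, hab, hb⟩ := Finset.extract_gcd a (Finset.univ_nonempty_iff.2 ⟨⟨0, hn⟩⟩)
  set c := Finset.univ.gcd a
  have hc : c ≠ 0 := fun h =>
    ha (funext fun i => Finset.gcd_eq_zero_iff.1 h i (Finset.mem_univ i))
  have hfilter : (Finset.univ.filter fun l : Fin n => ⟨0, hn⟩ ≤ l) = Finset.univ :=
    Finset.filter_true_of_mem fun l _ => Nat.zero_le _
  have hcast : (fun i => (a i : ℝ)) = (c : ℝ) • fun i => (b i : ℝ) := by
    ext i
    simp [hab i (Finset.mem_univ i)]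
  have hc2 : (1 : ℝ) ≤ (c : ℝ) ^ 2 := by
    have : (1 : ℤ) ≤ c ^ 2 := by nlinarith [Int.one_le_abs hc, sq_abs c]
    exact_mod_cast this
  have hb0 := hY.dotProduct_mulVec_nonneg (fun i => (b i : ℝ))
  have hred := hR.1 ⟨0, hn⟩ b (by rw [hfilter, hb])
  rw [hcast, mulVec_smul, dotProduct_smul, smul_dotProduct, smul_eq_mul, smul_eq_mul]
  simp only [star_trivial] at hb0
  nlinarith

theorem submatrix {m : ℕ} (hR : MinkowskiReduced Y) {f : Fin m → Fin n} (hf : StrictMono f)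
    (hsucc : ∀ i j : Fin m, (j : ℕ) = i + 1 → (f j : ℕ) = f i + 1) :
    MinkowskiReduced (Y.submatrix f f) := by
  refine ⟨fun k a ha => ?_, fun k hk => ?_⟩
  · have hdvd : (Finset.univ.filter fun l => f k ≤ l).gcd (Function.extend f a 0) ∣ 1 :=
      ha ▸ Finset.dvd_gcd fun i hi => by
        simpa [hf.injective.extend_apply] using Finset.gcd_dvd (f := Function.extend f a 0)
          (Finset.mem_filter.2 ⟨Finset.mem_univ (f i), hf.monotone (Finset.mem_filter.1 hi).2⟩)
    have hcast : (fun j => ((Function.extend f a 0 j : ℤ) : ℝ))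
        = Function.extend f (fun i => (a i : ℝ)) 0 := by
      ext j
      rw [Function.apply_extend (Int.cast : ℤ → ℝ)]
      simp [Function.comp_def, Pi.zero_def]
    have := hR.1 (f k) (Function.extend f a 0) (by
      rw [← Finset.normalize_gcd, normalize_eq_one]
      exact isUnit_of_dvd_one hdvd)
    rwa [hcast, ← dotProduct_submatrix_mulVec Y hf.injective] at this
  · have h := hsucc k ⟨k + 1, hk⟩ rfl
    simpa [← h] using hR.2 (f k) (h ▸ (f ⟨k + 1, hk⟩).isLt)

theorem diagLowerBound_of_gap (hR : MinkowskiReduced Y) (hY : Y.PosDef) {d s : ℝ} (hs : 0 ≤ s)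
    (hsub : ∀ m < n, ∀ Z : Matrix (Fin m) (Fin m) ℝ, Z.PosDef → MinkowskiReduced Z →
      DiagLowerBound d Z)
    {k : ℕ} (hk : k + 1 < n)
    (hgap : Y ⟨k, by omega⟩ ⟨k, by omega⟩ ≤ s ^ 2 * Y ⟨k + 1, hk⟩ ⟨k + 1, hk⟩) :
    DiagLowerBound (d - n * s) Y := by
  obtain ⟨b, rfl⟩ : ∃ b, n = (k + 1) + b := ⟨n - (k + 1), by omega⟩
  have hS := isHermitian_iff_isSymm.1 hY.isHermitian
  have hA := hsub _ (by omega) _ (hY.submatrix (Fin.strictMono_castAdd b).injective)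
    (hR.submatrix (Fin.strictMono_castAdd b) fun i j h => by simpa using h)
  have hC := hsub _ (by omega) _ (hY.submatrix (Fin.strictMono_natAdd (k + 1)).injective)
    (hR.submatrix (Fin.strictMono_natAdd (k + 1)) fun i j h => by
      simp only [Fin.val_natAdd, h]
      omega)
  have hcross : ∀ i j, Y (Fin.castAdd b i) (Fin.natAdd (k + 1) j) ^ 2 ≤ s ^ 2
      * Y (Fin.castAdd b i) (Fin.castAdd b i)
      * Y (Fin.natAdd (k + 1) j) (Fin.natAdd (k + 1) j) := by
    intro i j
    set p := Y (Fin.castAdd b i) (Fin.castAdd b i)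
    set y := Y (Fin.castAdd b i) (Fin.natAdd (k + 1) j)
    have hy : 2 * |y| ≤ p := hR.two_mul_abs_apply_le hS (by
      simp only [Fin.lt_def, Fin.val_castAdd, Fin.val_natAdd]
      omega)
    have hpk : p ≤ Y ⟨k, by omega⟩ ⟨k, by omega⟩ := hR.diag_mono (by
      simp only [Fin.le_def, Fin.val_castAdd]
      omega)
    have hkj : Y ⟨k + 1, hk⟩ ⟨k + 1, hk⟩ ≤ Y (Fin.natAdd (k + 1) j) (Fin.natAdd (k + 1) j) :=
      hR.diag_mono (by simp [Fin.le_def])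
    have hp : 0 < p := hY.diag_pos
    have hpj := hpk.trans (hgap.trans (mul_le_mul_of_nonneg_left hkj (sq_nonneg s)))
    calc y ^ 2 = |y| ^ 2 := (sq_abs y).symm
      _ ≤ (p / 2) ^ 2 := by gcongr; linarith
      _ ≤ p * p := by nlinarith
      _ ≤ _ := by nlinarith
  convert diagLowerBound_of_blocks hS (fun i => hY.diag_pos.le) hs hA hC hcross using 3
  push_cast
  ring

theorem diagLowerBound_of_no_gap (hR : MinkowskiReduced Y) (hY : Y.PosDef) (hn : 0 < n)
    {t : ℝ} (ht : 0 < t)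
    (hdrop : ∀ k (hk : k + 1 < n), t * Y ⟨k + 1, hk⟩ ⟨k + 1, hk⟩ < Y ⟨k, by omega⟩ ⟨k, by omega⟩)
    {N : ℕ} (hN : 4 * n ^ 2 ≤ t ^ (n - 1) * N ^ 2) :
    DiagLowerBound (t ^ (n - 1) / (4 * N ^ (2 * n))) Y := by
  set M := Y ⟨n - 1, by omega⟩ ⟨n - 1, by omega⟩
  have hM : ∀ k, Y k k ≤ M := fun k => hR.diag_mono (Fin.le_def.2 (Nat.le_sub_one_of_lt k.isLt))
  have hM0 : 0 < M := hY.diag_pos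
  have hpow : ∀ j (hj : j < n), t ^ j * Y ⟨j, hj⟩ ⟨j, hj⟩ ≤ Y ⟨0, hn⟩ ⟨0, hn⟩ := by
    intro j
    induction j with
    | zero => simp
    | succ j ih =>
      intro hj
      calc t ^ (j + 1) * Y ⟨j + 1, hj⟩ ⟨j + 1, hj⟩ = t ^ j * (t * Y ⟨j + 1, hj⟩ ⟨j + 1, hj⟩) := by
            ring
        _ ≤ t ^ j * Y ⟨j, by omega⟩ ⟨j, by omega⟩ := by gcongr; exact (hdrop j hj).le
        _ ≤ _ := ih _
  have hint : ∀ a : Fin n → ℤ, a ≠ 0 →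
      t ^ (n - 1) * M ≤ (fun i => (a i : ℝ)) ⬝ᵥ Y *ᵥ fun i => (a i : ℝ) := fun a ha =>
    (hpow (n - 1) (by omega)).trans (hR.apply_zero_zero_le hY.posSemidef hn ha)
  have hS := isHermitian_iff_isSymm.1 hY.isHermitian
  have key := hY.posSemidef.mul_sum_sq_le_of_le_int (by positivity)
    (hR.abs_apply_le hS (fun i => hY.diag_pos.le) hM) hint (N := N)
    (by rw [Fintype.card_fin]; nlinarith [mul_le_mul_of_nonneg_right hN hM0.le])
  rw [Fintype.card_fin] at key
  intro x
  calc t ^ (n - 1) / (4 * N ^ (2 * n)) * ∑ i, Y i i * x i ^ 2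
      ≤ t ^ (n - 1) / (4 * N ^ (2 * n)) * (M * ∑ i, x i ^ 2) := by
        refine mul_le_mul_of_nonneg_left ?_ (by positivity)
        rw [Finset.mul_sum]
        exact Finset.sum_le_sum fun i _ => mul_le_mul_of_nonneg_right (hM i) (sq_nonneg _)
    _ = t ^ (n - 1) * M / (4 * N ^ (2 * n)) * ∑ i, x i ^ 2 := by ring
    _ ≤ _ := key x

theorem exists_diagLowerBound_of_no_gap {t : ℝ} (ht0 : 0 < t) (ht1 : t ≤ 1) (n : ℕ) :
    ∃ δ : ℝ, 0 < δ ∧ ∀ m ≤ n, ∀ Y : Matrix (Fin m) (Fin m) ℝ, Y.PosDef → MinkowskiReduced Y →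
      (∀ k (hk : k + 1 < m), t * Y ⟨k + 1, hk⟩ ⟨k + 1, hk⟩ < Y ⟨k, by omega⟩ ⟨k, by omega⟩) →
      DiagLowerBound δ Y := by
  set N := ⌈4 * n ^ 2 / t ^ n⌉₊ + 1
  have hN1 : (1 : ℝ) ≤ N := by simp [N]
  have hN : 4 * (n : ℝ) ^ 2 ≤ t ^ n * N := by
    rw [← div_le_iff₀' (by positivity)]
    exact (Nat.le_ceil _).trans (by simp [N])
  refine ⟨t ^ n / (4 * N ^ (2 * n)), by positivity, fun m hm Y hY hR hdrop => ?_⟩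
  rcases Nat.eq_zero_or_pos m with rfl | hm0
  · intro x
    simp
  have hm' : (m : ℝ) ≤ n := by exact_mod_cast hm
  have htm : t ^ n ≤ t ^ (m - 1) := pow_le_pow_of_le_one ht0.le ht1 (by omega)
  refine (hR.diagLowerBound_of_no_gap hY hm0 ht0 hdrop (N := N) ?_).mono ?_
    fun i => hY.diag_pos.le
  · nlinarith [pow_pos ht0 (m - 1)]
  · gcongr

theorem exists_diagLowerBound (n : ℕ) : ∃ d : ℝ, 0 < d ∧ d ≤ 1 ∧ ∀ m ≤ n,
    ∀ Y : Matrix (Fin m) (Fin m) ℝ, Y.PosDef → MinkowskiReduced Y → DiagLowerBound d Y := by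
  induction n with
  | zero =>
    refine ⟨1, one_pos, le_rfl, fun m hm Y _ _ x => ?_⟩
    obtain rfl : m = 0 := by omega
    simp
  | succ n ih =>
    obtain ⟨d, hd0, hd1, hd⟩ := ih
    -- the off-diagonal blocks of a split then cost at most `(n + 1) * s = d / 2`
    set s := d / (2 * (n + 1))
    have hs0 : 0 < s := by positivity
    have hs1 : s ≤ 1 := by
      rw [div_le_one (by positivity)]
      linarith
    obtain ⟨δ, hδ0, hδ⟩ :=
      exists_diagLowerBound_of_no_gap (t := s ^ 2) (by positivity) (pow_le_one₀ hs0.le hs1) (n + 1)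
    refine ⟨min (d / 2) δ, by positivity, (min_le_left _ _).trans (by linarith),
      fun m hm Y hY hR => ?_⟩
    by_cases hgap : ∃ k, ∃ hk : k + 1 < m,
        Y ⟨k, by omega⟩ ⟨k, by omega⟩ ≤ s ^ 2 * Y ⟨k + 1, hk⟩ ⟨k + 1, hk⟩
    · obtain ⟨k, hk, hgap⟩ := hgap
      refine (hR.diagLowerBound_of_gap hY hs0.le (fun m' hm' => hd m' (by omega)) hk hgap).mono
        ?_ fun i => hY.diag_pos.le
      have : (m : ℝ) * s ≤ d / 2 := calc
        (m : ℝ) * s ≤ (n + 1) * s := by gcongr; exact_mod_cast hm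
        _ = d / 2 := by simp only [s]; field_simp
      linarith [min_le_left (d / 2) δ]
    · push Not at hgap
      exact (hδ m hm Y hY hR hgap).mono (min_le_right _ _) fun i => hY.diag_pos.le

end MinkowskiReduced

theorem stmt14_general (g : ℕ) :
    ∃ c : ℝ, 0 < c ∧
      ∀ Y : Matrix (Fin g) (Fin g) ℝ, Y.IsSymm → Y.PosDef → MinkowskiReduced Y →
        Y.det ≤ (∏ i : Fin g, Y i i) ∧ (∏ i : Fin g, Y i i) ≤ c * Y.det := by
  obtain ⟨d, hd0, -, hd⟩ := MinkowskiReduced.exists_diagLowerBound g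
  refine ⟨(d ^ g)⁻¹, by positivity, fun Y _ hY hR => ⟨hY.det_le_prod_diag, ?_⟩⟩
  have := hY.pow_card_mul_prod_diag_le_det hd0.le (hd g le_rfl Y hY hR)
  rw [Fintype.card_fin] at this
  rw [inv_mul_eq_div, le_div_iff₀ (by positivity)]
  linarith

theorem stmt14 (g : ℕ) (hg : 1 ≤ g) :
    ∃ c : ℝ, 0 < c ∧
      ∀ Y : Matrix (Fin g) (Fin g) ℝ, Y.IsSymm → Y.PosDef → MinkowskiReduced Y →
        Y.det ≤ (∏ i : Fin g, Y i i) ∧ (∏ i : Fin g, Y i i) ≤ c * Y.det :=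
  stmt14_general g
end

section
/- Let g ≥ 1 and let Z = X + iY ∈ S_g, with Y = (y_{ij}). Then √3/2 ≤ y_{11} and y_{11} ≤ y_{22} ≤ … ≤ y_{gg}. -/
open Matrix

/-- The standard alternating matrix `J = [[0, I], [-I, 0]]` of degree `2g`. -/
def symplJ (g : ℕ) (R : Type*) [CommRing R] :
    Matrix (Fin g ⊕ Fin g) (Fin g ⊕ Fin g) R :=
  Matrix.fromBlocks 0 1 (-1) 0

/-- `T ∈ Sp_{2g}(R)` iff `T * J * Tᵀ = J`. -/
def IsSymplectic {g : ℕ} {R : Type*} [CommRing R]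
    (T : Matrix (Fin g ⊕ Fin g) (Fin g ⊕ Fin g) R) : Prop :=
  T * symplJ g R * Tᵀ = symplJ g R

/-- The entrywise imaginary part of a complex matrix. -/
def imPart {g : ℕ} (Z : Matrix (Fin g) (Fin g) ℂ) : Matrix (Fin g) (Fin g) ℝ :=
  Z.map Complex.im

/-- `Z` lies in the Siegel upper half-space `ℍ_g`: it is symmetric with
positive definite imaginary part. -/
def InSiegel {g : ℕ} (Z : Matrix (Fin g) (Fin g) ℂ) : Prop :=
  Z.IsSymm ∧ (imPart Z).PosDef

/-- `Z` lies in the Siegel fundamental domain `S_g`. -/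
def InFundamentalDomain {g : ℕ} (Z : Matrix (Fin g) (Fin g) ℂ) : Prop :=
  InSiegel Z ∧
  (∀ i j, |(Z i j).re| ≤ 1 / 2) ∧
  MinkowskiReduced (imPart Z) ∧
  ∀ A B C D : Matrix (Fin g) (Fin g) ℤ,
    IsSymplectic (Matrix.fromBlocks A B C D) →
    1 ≤ ‖(C.map (fun n => (n : ℂ)) * Z + D.map (fun n => (n : ℂ))).det‖

/-!
Testing Minkowski reduction on the unit vectors `e_j` gives `y_{ii} ≤ y_{jj}` for `i ≤ j`.
For the bound, `Sp_{2g}(ℤ)` contains the copy of `S = [[0, -1], [1, 0]]` acting on one coordinate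
`k` alone, with `C = E_{kk}`, `D = 1 - E_{kk}` and hence `det(CZ + D) = z_{kk}`; so every `z_{kk}`
lies in the classical fundamental domain of `SL₂(ℤ)`, where `Im τ ≥ √3/2`.
-/

theorem Finset.gcd_eq_one_of_mem {ι α : Type*} [CommMonoidWithZero α] [NormalizedGCDMonoid α]
    {s : Finset ι} {f : ι → α} {i : ι} (hi : i ∈ s) (hfi : f i = 1) : s.gcd f = 1 := by
  rw [← Finset.normalize_gcd, normalize_eq_one]
  exact isUnit_of_dvd_one (hfi ▸ Finset.gcd_dvd hi)

theorem MinkowskiReduced.monotone_diag {g : ℕ} {Y : Matrix (Fin g) (Fin g) ℝ}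
    (hY : MinkowskiReduced Y) : Monotone Y.diag := by
  intro i j hij
  have hgcd : (Finset.univ.filter fun l => i ≤ l).gcd (Pi.single j 1 : Fin g → ℤ) = 1 :=
    Finset.gcd_eq_one_of_mem (by simpa using hij) (Pi.single_eq_same j 1)
  have hcast : (fun l => ((Pi.single j 1 : Fin g → ℤ) l : ℝ)) = Pi.single j 1 := by
    ext l
    by_cases hl : l = j <;> simp [hl]
  simpa [hcast, mulVec_single_one, single_one_dotProduct] using hY.1 i _ hgcd

theorem isSymplectic_fromBlocks_of_isIdempotentElem {g : ℕ} {R : Type*} [CommRing R]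
    {E : Matrix (Fin g) (Fin g) R} (hE : IsIdempotentElem E) (hEt : Eᵀ = E) :
    IsSymplectic (fromBlocks (1 - E) (-E) E (1 - E)) := by
  have hEE : E * E = E := hE
  simp only [IsSymplectic, symplJ, fromBlocks_transpose, fromBlocks_multiply,
    transpose_sub, transpose_one, transpose_neg, hEt, mul_zero, add_zero, zero_add,
    mul_sub, sub_mul, mul_one, one_mul, mul_neg, neg_mul, neg_neg, hEE]
  congr 1 <;> abel

theorem Matrix.det_updateRow_one {n R : Type*} [Fintype n] [DecidableEq n] [CommRing R]
    (k : n) (v : n → R) : (updateRow (1 : Matrix n n R) k v).det = v k := by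
  have hv : ∑ i, v i • (1 : Matrix n n R) i = v := by
    ext j
    simp [one_apply]
  simpa [hv] using det_updateRow_sum (1 : Matrix n n R) k v

theorem Matrix.single_mul_add_one_sub_single {n R : Type*} [Fintype n] [DecidableEq n]
    [CommRing R] (Z : Matrix n n R) (k : n) :
    single k k 1 * Z + (1 - single k k 1) = updateRow 1 k (Z k) := by
  ext i j
  by_cases hi : i = k
  · subst hi
    by_cases hj : i = j <;> simp [hj, updateRow_apply]
  · simp [hi, Ne.symm hi, updateRow_apply]

open scoped Modular in
theorem InFundamentalDomain.diag_mem_fd {g : ℕ} {Z : Matrix (Fin g) (Fin g) ℂ}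
    (hZ : InFundamentalDomain Z) (k : Fin g) : Z k k ∈ ((↑) '' 𝒟 : Set ℂ) := by
  obtain ⟨⟨-, hpos⟩, hre, -, hdet⟩ := hZ
  have hS := hdet _ _ _ _ (isSymplectic_fromBlocks_of_isIdempotentElem (E := single k k (1 : ℤ))
    (by simp [IsIdempotentElem]) (by simp))
  have hcast : (single k k (1 : ℤ)).map (fun n => (n : ℂ)) = single k k 1 :=
    (map_single k k (1 : ℤ) (Int.castRingHom ℂ)).trans (by simp)
  rw [ModularGroup.coe_fd]
  refine ⟨hpos.diag_pos (i := k), ?_, hre k k⟩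
  simpa [hcast, Matrix.map_sub, single_mul_add_one_sub_single, det_updateRow_one] using hS

theorem stmt15 (g : ℕ) (hg : 0 < g)
    (Z : Matrix (Fin g) (Fin g) ℂ) (hZ : InFundamentalDomain Z) :
    Real.sqrt 3 / 2 ≤ imPart Z ⟨0, hg⟩ ⟨0, hg⟩ ∧
      ∀ i j : Fin g, i ≤ j → imPart Z i i ≤ imPart Z j j := by
  refine ⟨?_, fun i j hij => hZ.2.2.1.monotone_diag hij⟩
  obtain ⟨τ, hτ, hτZ⟩ := hZ.diag_mem_fd ⟨0, hg⟩
  have him : imPart Z ⟨0, hg⟩ ⟨0, hg⟩ = τ.im := by simp [imPart, ← hτZ]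
  rw [him, div_le_iff₀ two_pos, Real.sqrt_le_iff]
  exact ⟨by positivity, by nlinarith [ModularGroup.three_le_four_mul_im_sq_of_mem_fd hτ]⟩
end
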